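/- Let F be a field of characteristic zero and n ≥ 5. The rational functions χ_1 = ξ_0 and χ_k = ξ_k² / ξ_1^{k+1} for 2 ≤ k ≤ n−3 are annihilated by the derivation F_T = Σ_{j=1}^{n−1} (1−j) x_j ∂/∂x_j of the field of rational functions F(x_1, …, x_{n−1}); equivalently, as smooth functions on the open set {x ∈ ℝ^{n−1} : ξ_1(x) ≠ 0} (when F = ℝ) each χ_k satisfies Σ_{j=1}^{n−1} (1−j) x_j · ∂χ_k/∂x_j = 0. (These are the n−3 generalized Casimir invariants of the solvable Lie algebra s_{n+1,3}.) -/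
import Mathlib


open MvPolynomial in
/-- The polynomial invariants `ξ_k` of the coadjoint representation of `n_{n,1}`:
`ξ_0 = x 1` and, for `k ≥ 1`,
`ξ_k = ((-1)^k k/(k+1)!) x_2^{k+1} + Σ_{j=0}^{k-1} ((-1)^j/j!) x_2^j x_{k+2-j} x_1^{k-j}`
(so `ξ_1 = -x_2²/2 + x_1 x_3`). -/
noncomputable def xi (F : Type*) [Field F] : ℕ → MvPolynomial ℕ F
  | 0 => X 1
  | k + 1 =>
      C ((-1 : F) ^ (k + 1) * ((k + 1 : ℕ) : F) / (((k + 2).factorial : ℕ) : F)) *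
          X 2 ^ (k + 2) +
        ∑ j ∈ Finset.range (k + 1),
          C ((-1 : F) ^ j / ((j.factorial : ℕ) : F)) * X 2 ^ j *
            X (k + 3 - j) * X 1 ^ (k + 1 - j)

/-- The `1`-based coordinates of a point `x ∈ ℝ^{n-1}`: `coords n x i = x_i` for
`1 ≤ i ≤ n-1` and `0` otherwise. -/
noncomputable def coords (n : ℕ) (x : Fin (n - 1) → ℝ) : ℕ → ℝ :=
  fun i => if h : 1 ≤ i ∧ i ≤ n - 1 then x ⟨i - 1, by omega⟩ else 0

/-- The `j`-th coordinate unit vector of `ℝ^{n-1}` (`1`-based). -/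
noncomputable def unitv (n : ℕ) (j : ℕ) : Fin (n - 1) → ℝ :=
  fun i => if i.val + 1 = j then 1 else 0

/-- The generalized Casimir invariants of the solvable Lie algebra `s_{n+1,3}`:
`χ_1 = ξ_0` and `χ_k = ξ_k² / ξ_1^{k+1}` for `k ≥ 2`. -/
noncomputable def chiS3 (n : ℕ) (k : ℕ) (x : Fin (n - 1) → ℝ) : ℝ :=
  if k = 1 then coords n x 1
  else (MvPolynomial.eval (coords n x) (xi ℝ k)) ^ 2 /
    (MvPolynomial.eval (coords n x) (xi ℝ 1)) ^ (k + 1)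

open MvPolynomial in
lemma eval_xi_scale (k : ℕ) (t : ℝ) (y : ℕ → ℝ) :
    MvPolynomial.eval (fun j => t ^ (j - 1) * y j) (xi ℝ (k + 1)) =
      t ^ (k + 2) * MvPolynomial.eval y (xi ℝ (k + 1)) := by
  simp only [xi, map_add, map_mul, map_sum, eval_C, eval_X, eval_pow, mul_pow, mul_add,
    Finset.mul_sum]
  congr 1
  · ring
  · apply Finset.sum_congr rfl
    intro j hj
    have hj' : j ≤ k := Finset.mem_range_succ_iff.mp hj
    have h1 : k + 3 - j - 1 = k + 2 - j := by omega
    rw [h1]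
    have h2 : t ^ j * t ^ (k + 2 - j) = t ^ (k + 2) := by
      rw [← pow_add]; congr 1; omega
    trans (t ^ j * t ^ (k + 2 - j) *
      ((-1:ℝ) ^ j / (j.factorial : ℝ) * y 2 ^ j * y (k + 3 - j) * y 1 ^ (k + 1 - j)))
    · ring
    · rw [h2]

lemma coords_scale (n : ℕ) (x : Fin (n - 1) → ℝ) (t : ℝ) :
    coords n (fun i => t ^ (i : ℕ) * x i) = fun j => t ^ (j - 1) * coords n x j := by
  funext j
  unfold coords
  by_cases h : 1 ≤ j ∧ j ≤ n - 1
  · simp only [dif_pos h]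
  · simp only [dif_neg h, mul_zero]

lemma diff_eval (n : ℕ) (P : MvPolynomial ℕ ℝ) :
    Differentiable ℝ fun x : Fin (n - 1) → ℝ => MvPolynomial.eval (coords n x) P := by
  induction P using MvPolynomial.induction_on with
  | C a => simp only [MvPolynomial.eval_C]; exact differentiable_const a
  | add p q hp hq => simp only [map_add]; exact hp.add hq
  | mul_X p i hp =>
      simp only [map_mul, MvPolynomial.eval_X]
      apply hp.mul
      unfold coords
      by_cases h : 1 ≤ i ∧ i ≤ n - 1
      · simp only [dif_pos h]
        exact (ContinuousLinearMap.proj (R := ℝ) (φ := fun _ : Fin (n-1) => ℝ)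
          ⟨i - 1, by omega⟩).differentiable
      · simp only [dif_neg h]
        exact differentiable_const 0

/-- For `n ≥ 5`, the functions `χ_1 = ξ_0` and
`χ_k = ξ_k² / ξ_1^{k+1}` (`2 ≤ k ≤ n-3`) each satisfy
`Σ_{j=1}^{n-1} (1-j) x_j ∂χ_k/∂x_j = 0` on the open set `{x : ξ_1(x) ≠ 0}`:
they are the generalized Casimir invariants of `s_{n+1,3}`. -/
theorem chiS3_invariant (n : ℕ) (hn : 5 ≤ n)
    (k : ℕ) (hk1 : 1 ≤ k) (hk2 : k ≤ n - 3)
    (x : Fin (n - 1) → ℝ) (hx : MvPolynomial.eval (coords n x) (xi ℝ 1) ≠ 0) :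
    DifferentiableAt ℝ (chiS3 n k) x ∧
    ∑ j ∈ Finset.Icc 1 (n - 1),
      (1 - (j : ℝ)) * coords n x j * fderiv ℝ (chiS3 n k) x (unitv n j) = 0 := by
  have hdiff : DifferentiableAt ℝ (chiS3 n k) x := by
    rcases eq_or_ne k 1 with rfl | hk
    · have he : chiS3 n 1 = fun z : Fin (n - 1) → ℝ => z ⟨0, by omega⟩ := by
        funext z
        simp only [chiS3, if_pos rfl, coords, dif_pos (show 1 ≤ 1 ∧ 1 ≤ n - 1 by omega),
          if_true]
      rw [he]
      exact ((ContinuousLinearMap.proj (R := ℝ) (φ := fun _ : Fin (n-1) => ℝ)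
        ⟨0, by omega⟩).differentiable _)
    · have he : chiS3 n k = fun z : Fin (n - 1) → ℝ =>
          (MvPolynomial.eval (coords n z) (xi ℝ k)) ^ 2 /
            (MvPolynomial.eval (coords n z) (xi ℝ 1)) ^ (k + 1) := by
        funext z; simp only [chiS3, if_neg hk]
      rw [he]
      have h1 : DifferentiableAt ℝ (fun z : Fin (n - 1) → ℝ =>
          (MvPolynomial.eval (coords n z) (xi ℝ k)) ^ 2) x := (diff_eval n (xi ℝ k) x).pow 2
      have h2 : DifferentiableAt ℝ (fun z : Fin (n - 1) → ℝ =>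
          (MvPolynomial.eval (coords n z) (xi ℝ 1)) ^ (k + 1)) x :=
        (diff_eval n (xi ℝ 1) x).pow (k + 1)
      simp only [div_eq_mul_inv]
      exact h1.mul (h2.inv (pow_ne_zero _ hx))
  refine ⟨hdiff, ?_⟩
  set ρ : ℝ → (Fin (n - 1) → ℝ) := fun t => fun i => t ^ (i : ℕ) * x i with hρdef
  set v : Fin (n - 1) → ℝ := fun i => ((i : ℕ) : ℝ) * x i with hvdef
  have hρ1 : ρ 1 = x := by funext i; simp [hρdef]
  have hρD : HasDerivAt ρ v 1 := by
    rw [hasDerivAt_pi]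
    intro i
    simpa using (hasDerivAt_pow (i : ℕ) (1 : ℝ)).mul_const (x i)
  have hconst : ∀ t : ℝ, t ≠ 0 → chiS3 n k (ρ t) = chiS3 n k x := by
    intro t ht
    rcases eq_or_ne k 1 with rfl | hk
    · simp only [chiS3, if_pos rfl, hρdef, coords_scale, if_true]
      norm_num
    · obtain ⟨m, rfl⟩ : ∃ m, k = m + 1 := ⟨k - 1, by omega⟩
      simp only [chiS3, if_neg hk, hρdef, coords_scale, eval_xi_scale]
      have key : ∀ (A B : ℝ), (t ^ (m + 2) * A) ^ 2 / (t ^ 2 * B) ^ (m + 1 + 1) =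
          A ^ 2 / B ^ (m + 1 + 1) := by
        intro A B
        rw [mul_pow, mul_pow, ← pow_mul, ← pow_mul,
          show (m + 2) * 2 = 2 * (m + 1 + 1) by ring,
          mul_div_mul_left _ _ (pow_ne_zero _ ht)]
      exact key _ _
  have hzero : fderiv ℝ (chiS3 n k) x v = 0 := by
    have hF : HasFDerivAt (chiS3 n k) (fderiv ℝ (chiS3 n k) x) (ρ 1) := by
      rw [hρ1]; exact hdiff.hasFDerivAt
    have hcomp : HasDerivAt (chiS3 n k ∘ ρ) (fderiv ℝ (chiS3 n k) x v) 1 :=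
      hF.comp_hasDerivAt 1 hρD
    have h0 : HasDerivAt (chiS3 n k ∘ ρ) 0 1 := by
      apply (hasDerivAt_const (1 : ℝ) (chiS3 n k x)).congr_of_eventuallyEq
      filter_upwards [IsOpen.mem_nhds isOpen_ne (show (1:ℝ) ≠ 0 from one_ne_zero)] with t ht
      exact hconst t ht
    exact hcomp.unique h0
  have hterm : ∀ j : ℕ, (1 - (j : ℝ)) * coords n x j * fderiv ℝ (chiS3 n k) x (unitv n j) =
      fderiv ℝ (chiS3 n k) x (((1 - (j : ℝ)) * coords n x j) • unitv n j) := by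
    intro j
    rw [map_smul, smul_eq_mul]
  have hvec : ∑ j ∈ Finset.Icc 1 (n - 1), ((1 - (j : ℝ)) * coords n x j) • unitv n j = -v := by
    funext i
    rw [Finset.sum_apply]
    rw [Finset.sum_eq_single_of_mem ((i : ℕ) + 1)
      (by simp only [Finset.mem_Icc]; omega)]
    · have hc : coords n x ((i : ℕ) + 1) = x i := by
        simp only [coords, dif_pos (show 1 ≤ (i:ℕ) + 1 ∧ (i:ℕ) + 1 ≤ n - 1 by omega)]
        exact congrArg x (Fin.ext (by simp only [Fin.val_mk]; omega))
      have hu : unitv n ((i : ℕ) + 1) i = 1 := by simp [unitv]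
      simp only [Pi.smul_apply, smul_eq_mul, hu, hc, Pi.neg_apply, hvdef]
      push_cast
      ring
    · intro j hj hne
      have hu : unitv n j i = 0 := by
        simp only [unitv]
        exact if_neg fun h => hne h.symm
      simp [hu]
  calc ∑ j ∈ Finset.Icc 1 (n - 1),
        (1 - (j : ℝ)) * coords n x j * fderiv ℝ (chiS3 n k) x (unitv n j)
      = ∑ j ∈ Finset.Icc 1 (n - 1),
          fderiv ℝ (chiS3 n k) x (((1 - (j : ℝ)) * coords n x j) • unitv n j) :=
        Finset.sum_congr rfl fun j _ => hterm j
    _ = fderiv ℝ (chiS3 n k) x (∑ j ∈ Finset.Icc 1 (n - 1),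
          ((1 - (j : ℝ)) * coords n x j) • unitv n j) := (map_sum _ _ _).symm
    _ = fderiv ℝ (chiS3 n k) x (-v) := by rw [hvec]
    _ = 0 := by rw [map_neg, hzero, neg_zero]
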